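/- The map τ on the rational function field ℚ(u,v) sending u ↦ u and v ↦ -4(v-3u)³/(4u³+27v-18uv-u²v+4v²) is not an involution; that is, τ(τ(v)) ≠ v as rational functions. -/
import Mathlib


/-- The field `ℚ(u,v)` of rational functions in two variables. -/
abbrev RatFuncUV : Type := FractionRing (MvPolynomial (Fin 2) ℚ)

/-- The transcendental `u`. -/
noncomputable def uGen : RatFuncUV :=
  algebraMap (MvPolynomial (Fin 2) ℚ) RatFuncUV (MvPolynomial.X 0)

/-- The transcendental `v`. -/
noncomputable def vGen : RatFuncUV :=
  algebraMap (MvPolynomial (Fin 2) ℚ) RatFuncUV (MvPolynomial.X 1)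

/-- The map `w ↦ β(w) = -4(w-3u)³/(4u³+27w-18uw-u²w+4w²)` (with `u` fixed). -/
noncomputable def tauV (w : RatFuncUV) : RatFuncUV :=
  -4 * (w - 3 * uGen) ^ 3 /
    (4 * uGen ^ 3 + 27 * w - 18 * uGen * w - uGen ^ 2 * w + 4 * w ^ 2)

noncomputable def AK : MvPolynomial (Fin 2) ℚ →+* RatFuncUV :=
  algebraMap (MvPolynomial (Fin 2) ℚ) RatFuncUV

lemma AK_inj : Function.Injective AK :=
  IsFractionRing.injective (MvPolynomial (Fin 2) ℚ) RatFuncUV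

open MvPolynomial in
noncomputable def P1 : MvPolynomial (Fin 2) ℚ := -4 * (X 1 - 3 * X 0) ^ 3

open MvPolynomial in
noncomputable def Q1 : MvPolynomial (Fin 2) ℚ :=
  4 * X 0 ^ 3 + 27 * X 1 - 18 * X 0 * X 1 - X 0 ^ 2 * X 1 + 4 * X 1 ^ 2

open MvPolynomial in
noncomputable def E2 : MvPolynomial (Fin 2) ℚ :=
  4 * X 0 ^ 3 * Q1 ^ 2 + (27 - 18 * X 0 - X 0 ^ 2) * P1 * Q1 + 4 * P1 ^ 2

lemma eval_P1 : MvPolynomial.eval ![(0:ℚ), 1] P1 = -4 := by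
  simp [P1]

lemma eval_Q1 : MvPolynomial.eval ![(0:ℚ), 1] Q1 = 31 := by
  simp [Q1]; norm_num

lemma eval_E2 : MvPolynomial.eval ![(0:ℚ), 1] E2 = -3284 := by
  simp [E2, eval_P1, eval_Q1]
  norm_num

lemma Q1_ne : Q1 ≠ 0 := by
  intro hh
  have := congrArg (MvPolynomial.eval ![(0:ℚ), 1]) hh
  rw [eval_Q1] at this
  simp at this

lemma E2_ne : E2 ≠ 0 := by
  intro hh
  have := congrArg (MvPolynomial.eval ![(0:ℚ), 1]) hh
  rw [eval_E2] at this
  simp at this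

lemma tauV_div (a b : RatFuncUV) (hb : b ≠ 0)
    (he : 4 * uGen ^ 3 * b ^ 2 + (27 - 18 * uGen - uGen ^ 2) * a * b + 4 * a ^ 2 ≠ 0) :
    tauV (a / b) = (-4 * (a - 3 * uGen * b) ^ 3) /
      (b * (4 * uGen ^ 3 * b ^ 2 + (27 - 18 * uGen - uGen ^ 2) * a * b + 4 * a ^ 2)) := by
  have hD : 4 * uGen ^ 3 + 27 * (a / b) - 18 * uGen * (a / b) - uGen ^ 2 * (a / b)
      + 4 * (a / b) ^ 2
      = (4 * uGen ^ 3 * b ^ 2 + (27 - 18 * uGen - uGen ^ 2) * a * b + 4 * a ^ 2) / b ^ 2 := by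
    field_simp
    ring
  rw [tauV, hD]
  field_simp

lemma hu : uGen = AK (MvPolynomial.X 0) := rfl
lemma hv : vGen = AK (MvPolynomial.X 1) := rfl

lemma hP1 : AK P1 = -4 * (vGen - 3 * uGen) ^ 3 := by
  simp only [P1, map_neg, map_mul, map_ofNat, map_sub, map_pow, hu, hv]

lemma hQ1 : AK Q1 = 4 * uGen ^ 3 + 27 * vGen - 18 * uGen * vGen - uGen ^ 2 * vGen
    + 4 * vGen ^ 2 := by
  simp only [Q1, map_add, map_sub, map_mul, map_ofNat, map_pow, hu, hv]

lemma hE2 : AK E2 = 4 * uGen ^ 3 * (AK Q1) ^ 2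
    + (27 - 18 * uGen - uGen ^ 2) * (AK P1) * (AK Q1) + 4 * (AK P1) ^ 2 := by
  simp only [E2, map_add, map_sub, map_mul, map_ofNat, map_pow, hu]

/-- The map `τ : u ↦ u, v ↦ β(v)` on `ℚ(u,v)` is not an involution:
`τ(τ(v)) ≠ v` as rational functions. -/
theorem tau_not_involution : tauV (tauV vGen) ≠ vGen := by
  intro h
  have hQ1ne : AK Q1 ≠ 0 := (map_ne_zero_iff AK AK_inj).mpr Q1_ne
  have hE2ne : AK E2 ≠ 0 := (map_ne_zero_iff AK AK_inj).mpr E2_ne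
  have heE : 4 * uGen ^ 3 * (AK Q1) ^ 2
      + (27 - 18 * uGen - uGen ^ 2) * (AK P1) * (AK Q1) + 4 * (AK P1) ^ 2 ≠ 0 := by
    rw [← hE2]; exact hE2ne
  have hV1 : tauV vGen = AK P1 / AK Q1 := by
    rw [tauV, hP1, hQ1]
  rw [hV1, tauV_div (AK P1) (AK Q1) hQ1ne heE, div_eq_iff (mul_ne_zero hQ1ne (hE2 ▸ hE2ne))] at h
  have hpoly : -4 * (P1 - 3 * MvPolynomial.X 0 * Q1) ^ 3
      = MvPolynomial.X 1 * (Q1 * E2) := by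
    apply AK_inj
    simp only [map_neg, map_mul, map_ofNat, map_sub, map_pow, ← hu, ← hv, hE2]
    linear_combination h
  have := congrArg (MvPolynomial.eval ![(0:ℚ), 1]) hpoly
  simp only [map_neg, map_mul, map_ofNat, map_sub, map_pow, map_add,
    MvPolynomial.eval_X, eval_P1, eval_Q1, eval_E2] at this
  norm_num [Matrix.cons_val_zero, Matrix.cons_val_one] at this
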